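/- For every finite simple graph G = (V,E) and interactions J : E → ℝ, h : V → ℝ, one has Z(G;J,h) = (∏_{v∈V} e^{h_v}) · Σ_{I} ∏_{w∈I} c_w, where the sum ranges over all independent sets I of the subdivision graph G′ of G, and the weight c_w equals A_{uv} := e^{J_{uv}} − 1 if w is the subdivision vertex corresponding to the edge uv ∈ E, and equals B_v := e^{−h_v} if w is an original vertex v ∈ V. In other words, Z(G;J,h) equals (∏_v e^{h_v}) times the multivariate independence polynomial of the bipartite graph G′ evaluated at the weights (A,B). -/

import Mathlib

/-!
Encode a configuration `s` by the set `L` of vertices with `s v = 0`. Then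
`exp (∑ J_e s_u s_v + ∑ h_v s_v) = ∏_v e^{h_v} · ∏_{v ∈ L} B_v · ∏_{e ∩ L = ∅} e^{J_e}`.
On the other side, the subdivision `G'` is bipartite, so its independent sets are the sets
`L ⊔ F` with `F` any set of edges avoiding `L`; summing over `F` with `L` fixed gives
`∏_{v ∈ L} B_v · ∏_{e ∩ L = ∅} (1 + A_e)`, and `1 + A_e = e^{J_e}`.
-/

open scoped Classical

/-- Multivariate independence polynomial of `G`: sum over independent sets `I`
of `∏ v ∈ I, X v`. -/
noncomputable def indepPoly {V : Type} [Fintype V] (G : SimpleGraph V) :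
    MvPolynomial V ℝ :=
  ∑ I ∈ Finset.univ.filter (fun I : Finset V => ∀ u ∈ I, ∀ v ∈ I, ¬ G.Adj u v),
    ∏ v ∈ I, MvPolynomial.X v

/-- A permutation voltage assignment on `G` with values in `S_M`:
`α u v = (α v u)⁻¹` on directed edges, and (as a normalization) `α u v = 1`
on non-adjacent pairs. -/
def IsVoltage {V : Type} (G : SimpleGraph V) (M : ℕ)
    (α : V → V → Equiv.Perm (Fin M)) : Prop :=
  (∀ u v, G.Adj u v → α v u = (α u v)⁻¹) ∧ (∀ u v, ¬ G.Adj u v → α u v = 1)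

/-- The `M`-cover of `G` determined by a voltage assignment `α`:
`(u,k)` is adjacent to `(v,l)` exactly when `u ~ v` in `G` and `l = α u v k`. -/
def cover {V : Type} (G : SimpleGraph V) (M : ℕ)
    (α : V → V → Equiv.Perm (Fin M)) : SimpleGraph (V × Fin M) :=
  SimpleGraph.fromRel (fun p q => G.Adj p.1 q.1 ∧ q.2 = α p.1 q.1 p.2)

/-- Partition function of the binary pairwise model on `G` with interactions `J, h`. -/
noncomputable def partitionZ {V : Type} [Fintype V] (G : SimpleGraph V)
    (J : Sym2 V → ℝ) (h : V → ℝ) : ℝ :=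
  ∑ s : V → Bool, Real.exp
    ((∑ e ∈ G.edgeFinset,
        J e * Sym2.lift ⟨fun u v => (if s u then (1:ℝ) else 0) * (if s v then (1:ℝ) else 0),
          fun u v => by ring⟩ e)
      + ∑ v, h v * (if s v then (1:ℝ) else 0))

/-- The subdivision graph `G'` of `G`: vertices `V ⊔ E`, with `v ∈ V` adjacent to
`e ∈ E` exactly when `v` is an endpoint of `e`. -/
def subdivision {V : Type} (G : SimpleGraph V) : SimpleGraph (V ⊕ G.edgeSet) :=
  SimpleGraph.fromRel (fun a b =>
    ∃ (v : V) (e : G.edgeSet), a = Sum.inl v ∧ b = Sum.inr e ∧ v ∈ (e : Sym2 V))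

namespace SimpleGraph

variable {α β : Type*} {H : SimpleGraph (α ⊕ β)}

lemma forall_not_adj_disjSum_iff (hH : H ≤ completeBipartiteGraph α β) (L : Finset α)
    (B : Finset β) :
    (∀ a ∈ L.disjSum B, ∀ b ∈ L.disjSum B, ¬ H.Adj a b) ↔
      ∀ x ∈ L, ∀ y ∈ B, ¬ H.Adj (.inl x) (.inr y) := by
  refine ⟨fun hI x hx y hy => hI _ (Finset.inl_mem_disjSum.2 hx) _
    (Finset.inr_mem_disjSum.2 hy), fun hLB a ha b hb hab => ?_⟩
  rw [Finset.mem_disjSum] at ha hb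
  rcases ha with ⟨x, hx, rfl⟩ | ⟨y, hy, rfl⟩ <;> rcases hb with ⟨x', hx', rfl⟩ | ⟨y', hy', rfl⟩
  · simpa using hH hab
  · exact hLB x hx y' hy' hab
  · exact hLB x' hx' y hy hab.symm
  · simpa using hH hab

theorem sum_indepSets_eq_sum_prod_one_add {R : Type*} [CommSemiring R] [Fintype α] [Fintype β]
    [DecidableEq α] [DecidableEq β] (hH : H ≤ completeBipartiteGraph α β)
    (p : α → R) (q : β → R) :
    ∑ I ∈ Finset.univ.filter (fun I : Finset (α ⊕ β) => ∀ a ∈ I, ∀ b ∈ I, ¬ H.Adj a b),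
        ∏ w ∈ I, Sum.elim p q w
      = ∑ L : Finset α, (∏ x ∈ L, p x) *
          ∏ y ∈ Finset.univ.filter (fun y => ∀ x ∈ L, ¬ H.Adj (.inl x) (.inr y)), (1 + q y) := by
  rw [Finset.sum_filter, ← Finset.sumEquiv.symm.toEquiv.sum_comp, Fintype.sum_prod_type]
  refine Finset.sum_congr rfl fun L _ => ?_
  simp only [OrderIso.coe_toEquiv, Finset.sumEquiv_symm_apply, forall_not_adj_disjSum_iff hH,
    Finset.prod_disjSum, Sum.elim_inl, Sum.elim_inr, Finset.prod_one_add, Finset.mul_sum,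
    ← Finset.sum_filter]
  congr 1
  ext B
  simp only [Finset.mem_filter, Finset.mem_univ, true_and, Finset.mem_powerset, Finset.subset_iff]
  exact forall₂_comm

end SimpleGraph

lemma subdivision_adj_inl_inr {V : Type} (G : SimpleGraph V) (v : V) (e : G.edgeSet) :
    (subdivision G).Adj (.inl v) (.inr e) ↔ v ∈ (e : Sym2 V) := by
  simp [subdivision]

lemma subdivision_le_completeBipartiteGraph {V : Type} (G : SimpleGraph V) :
    subdivision G ≤ completeBipartiteGraph V G.edgeSet := by
  rintro a b ⟨-, ⟨v, e, rfl, rfl, -⟩ | ⟨v, e, rfl, rfl, -⟩⟩ <;> simp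

lemma sym2_lift_indicator_mul_indicator {V : Type} (s : V → Bool) (e : Sym2 V) :
    Sym2.lift ⟨fun u v => (if s u then (1:ℝ) else 0) * (if s v then (1:ℝ) else 0),
      fun u v => by ring⟩ e = if ∀ v ∈ e, s v = true then 1 else 0 := by
  induction e using Sym2.ind with
  | _ u v => by_cases hu : s u <;> by_cases hv : s v <;> simp [hu, hv]

lemma exp_energy_eq_prod {V : Type} [Fintype V] (G : SimpleGraph V) (J : Sym2 V → ℝ) (h : V → ℝ)
    (s : V → Bool) :
    Real.exp ((∑ e ∈ G.edgeFinset,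
        J e * Sym2.lift ⟨fun u v => (if s u then (1:ℝ) else 0) * (if s v then (1:ℝ) else 0),
          fun u v => by ring⟩ e)
      + ∑ v, h v * (if s v then (1:ℝ) else 0))
    = (∏ v, Real.exp (h v)) * ((∏ v ∈ Finset.univ.filter (fun v => s v = false), Real.exp (-h v))
        * ∏ e ∈ G.edgeFinset.filter (fun e => ∀ v ∈ e, s v = true), Real.exp (J e)) := by
  have hedge : ∀ e, Real.exp (J e * Sym2.lift ⟨fun u v => (if s u then (1:ℝ) else 0) *
      (if s v then (1:ℝ) else 0), fun u v => by ring⟩ e)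
      = if ∀ v ∈ e, s v = true then Real.exp (J e) else 1 := by
    intro e
    rw [sym2_lift_indicator_mul_indicator]
    split_ifs <;> simp
  have hvert : ∀ v, Real.exp (h v * if s v then 1 else 0)
      = Real.exp (h v) * if s v = false then Real.exp (-h v) else 1 := by
    intro v
    cases s v <;> simp [← Real.exp_add]
  rw [Real.exp_add, Real.exp_sum, Real.exp_sum, Finset.prod_congr rfl fun e _ => hedge e,
    Finset.prod_congr rfl fun v _ => hvert v, Finset.prod_mul_distrib, ← Finset.prod_filter,
    ← Finset.prod_filter]
  ring

lemma partitionZ_eq_sum_finset {V : Type} [Fintype V] (G : SimpleGraph V) (J : Sym2 V → ℝ)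
    (h : V → ℝ) :
    partitionZ G J h = (∏ v, Real.exp (h v)) * ∑ L : Finset V, (∏ v ∈ L, Real.exp (-h v)) *
      ∏ e ∈ G.edgeFinset.filter (fun e => ∀ v ∈ L, v ∉ e), Real.exp (J e) := by
  let offSet : (V → Bool) ≃ Finset V :=
    { toFun := fun s => Finset.univ.filter (fun v => s v = false)
      invFun := fun L v => decide (v ∉ L)
      left_inv := fun s => by ext v; simp
      right_inv := fun L => by ext v; simp }
  rw [partitionZ, Finset.mul_sum, ← offSet.sum_comp]
  refine Finset.sum_congr rfl fun s _ => ?_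
  simp only [exp_energy_eq_prod, offSet, Equiv.coe_fn_mk, Finset.mem_filter, Finset.mem_univ,
    true_and]
  refine congrArg _ (congrArg _ (Finset.prod_congr (Finset.filter_congr fun e _ => ?_)
    fun _ _ => rfl))
  exact forall_congr' fun v => by cases s v <;> simp

/-- the partition function equals `∏_v e^{h_v}` times the independence
polynomial of the subdivision graph `G'` evaluated at the weights
`A_e = e^{J_e} - 1` (subdivision vertices) and `B_v = e^{-h_v}` (original vertices). -/
theorem stmt3 {V : Type} [Fintype V] (G : SimpleGraph V)
    (J : Sym2 V → ℝ) (h : V → ℝ) :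
    partitionZ G J h
      = (∏ v, Real.exp (h v)) *
        ∑ I ∈ Finset.univ.filter
            (fun I : Finset (V ⊕ G.edgeSet) =>
              ∀ a ∈ I, ∀ b ∈ I, ¬ (subdivision G).Adj a b),
          ∏ w ∈ I,
            Sum.elim (fun v => Real.exp (-h v))
              (fun e : G.edgeSet => Real.exp (J e.val) - 1) w := by
  rw [partitionZ_eq_sum_finset, SimpleGraph.sum_indepSets_eq_sum_prod_one_add
    (subdivision_le_completeBipartiteGraph G)]
  refine congrArg _ (Finset.sum_congr rfl fun L _ => congrArg _ ?_)
  simp only [subdivision_adj_inl_inr, add_sub_cancel, Finset.prod_filter]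
  rw [Finset.prod_subtype G.edgeFinset (fun _ => SimpleGraph.mem_edgeFinset)]
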